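/- arXiv:math/0609845 — 5 statements merged into one kernel-verified Lean document; each statement's English description precedes it below -/
import Mathlib

section
/- Let q ≥ 2 and 0 ≤ r < q. Then the limit as n → ∞ of (∑_{i=0}^{⌊(n-1)/q⌋} C(n-1, iq+r)) / 2^{n-1} equals 1/q. -/
/-!
Roots of unity filter: for a primitive `q`-th root of unity `ζ`,
`q * ∑_{k ≡ r [MOD q]} C(m, k) = ∑_{j < q} ζ^{-jr} (1 + ζ^j)^m` (with `ζ^{-r}` written `ζ^(q - r)`).
After dividing by `2^m`, the term `j = 0` is `1`, and every other term decays geometrically,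
because `|1 + ζ^j| < 2` when `ζ^j ≠ 1`.
-/

open Filter Finset

theorem Nat.dvd_add_sub_iff_mod_eq {q r k : ℕ} (hr : r < q) : q ∣ k + (q - r) ↔ k % q = r := by
  rw [← ZMod.natCast_eq_zero_iff, Nat.cast_add, Nat.cast_sub hr.le, ZMod.natCast_self, zero_sub,
    ← sub_eq_add_neg, sub_eq_zero, ZMod.natCast_eq_natCast_iff', Nat.mod_eq_of_lt hr]

namespace IsPrimitiveRoot

variable {R : Type*} [CommRing R] [IsDomain R] {ζ : R} {q : ℕ}

theorem sum_range_pow_pow_eq_ite (hζ : IsPrimitiveRoot ζ q) (e : ℕ) :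
    ∑ j ∈ range q, (ζ ^ e) ^ j = if q ∣ e then (q : R) else 0 := by
  split_ifs with he
  · simp [(hζ.pow_eq_one_iff_dvd e).2 he]
  · have hne : 1 - ζ ^ e ≠ 0 := sub_ne_zero.2 fun h ↦ he ((hζ.pow_eq_one_iff_dvd e).1 h.symm)
    refine (mul_right_inj' hne).1 ?_
    rw [mul_neg_geom_sum, ← pow_mul, mul_comm, pow_mul, hζ.pow_eq_one, one_pow, sub_self,
      mul_zero]

theorem sum_range_sum_mul_pow_eq_sum_filter_mod (hζ : IsPrimitiveRoot ζ q) {r : ℕ} (hr : r < q)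
    (s : Finset ℕ) (a : ℕ → R) :
    ∑ j ∈ range q, ∑ k ∈ s, a k * (ζ ^ (k + (q - r))) ^ j =
      q * ∑ k ∈ s with k % q = r, a k := by
  simp_rw [sum_comm (s := range q), ← mul_sum, hζ.sum_range_pow_pow_eq_ite,
    Nat.dvd_add_sub_iff_mod_eq hr, mul_sum, sum_filter]
  exact sum_congr rfl fun k _ ↦ by split_ifs <;> ring

theorem sum_range_pow_mul_one_add_pow (hζ : IsPrimitiveRoot ζ q) {r : ℕ} (hr : r < q)
    {M : ℕ} (m : ℕ) (hm : m < M) :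
    ∑ j ∈ range q, ζ ^ (j * (q - r)) * (1 + ζ ^ j) ^ m =
      q * ∑ k ∈ range M with k % q = r, (m.choose k : R) := by
  rw [← hζ.sum_range_sum_mul_pow_eq_sum_filter_mod hr]
  refine sum_congr rfl fun j _ ↦ ?_
  have hextend : ∑ k ∈ range M, (m.choose k : R) * (ζ ^ (k + (q - r))) ^ j =
      ∑ k ∈ range (m + 1), (m.choose k : R) * (ζ ^ (k + (q - r))) ^ j :=
    (sum_subset (range_subset_range.2 hm) fun k _ hk ↦ by
      rw [Nat.choose_eq_zero_of_lt (by simpa using hk), Nat.cast_zero, zero_mul]).symm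
  rw [hextend, add_comm, add_pow, mul_sum]
  refine sum_congr rfl fun k _ ↦ ?_
  rw [one_pow, mul_one, ← pow_mul, ← pow_mul, add_mul, pow_add]
  ring

end IsPrimitiveRoot

theorem Finset.sum_range_mul_add_eq_sum_filter_mod {M : Type*} [AddCommMonoid M] {q r : ℕ}
    (hr : r < q) (n : ℕ) (f : ℕ → M) :
    ∑ i ∈ range n, f (i * q + r) = ∑ k ∈ range (n * q) with k % q = r, f k := by
  have hinj : Set.InjOn (fun i ↦ i * q + r) (range n) := fun i _ j _ h ↦
    Nat.eq_of_mul_eq_mul_right (by omega) (Nat.add_right_cancel h)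
  rw [← sum_image hinj]
  congr 1
  ext k
  simp only [mem_image, mem_filter, mem_range]
  constructor
  · rintro ⟨i, hi, rfl⟩
    refine ⟨by nlinarith, ?_⟩
    rw [Nat.mul_comm, Nat.mul_add_mod, Nat.mod_eq_of_lt hr]
  · rintro ⟨hk, rfl⟩
    exact ⟨k / q, Nat.div_lt_of_lt_mul (by rwa [mul_comm]), Nat.div_add_mod' k q⟩

theorem Complex.norm_one_add_div_two_lt_one {z : ℂ} (hz : ‖z‖ = 1) (h1 : z ≠ 1) :
    ‖(1 + z) / 2‖ < 1 := by
  have := (norm_midpoint_lt_iff (x := (1 : ℂ)) (by rw [norm_one, hz])).2 h1.symm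
  rwa [norm_one, Complex.real_smul, one_div, Complex.ofReal_inv, Complex.ofReal_ofNat,
    ← div_eq_inv_mul] at this

theorem IsPrimitiveRoot.tendsto_sum_mul_one_add_div_two_pow {ζ : ℂ} {q : ℕ}
    (hζ : IsPrimitiveRoot ζ q) (hq : 0 < q) (c : ℕ → ℂ) :
    Tendsto (fun m ↦ ∑ j ∈ range q, c j * ((1 + ζ ^ j) / 2) ^ m) atTop (nhds (c 0)) := by
  have hterm : ∀ j ∈ range q, Tendsto (fun m ↦ c j * ((1 + ζ ^ j) / 2) ^ m) atTop
      (nhds (if j = 0 then c 0 else 0)) := by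
    intro j hj
    split_ifs with hj0
    · subst hj0
      norm_num
    · rw [← mul_zero (c j)]
      refine (tendsto_pow_atTop_nhds_zero_of_norm_lt_one ?_).const_mul _
      refine Complex.norm_one_add_div_two_lt_one ?_
        (hζ.pow_ne_one_of_pos_of_lt hj0 (mem_range.1 hj))
      rw [norm_pow, Complex.norm_eq_one_of_pow_eq_one hζ.pow_eq_one hq.ne', one_pow]
  simpa [hq] using tendsto_finsetSum _ hterm

theorem tendsto_sum_choose_mul_add_div_two_pow {q r : ℕ} (hr : r < q) :
    Tendsto (fun m ↦ (∑ i ∈ range (m / q + 1), (m.choose (i * q + r) : ℝ)) / 2 ^ m) atTop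
      (nhds (1 / q)) := by
  have hq : 0 < q := by omega
  obtain ⟨ζ, hζ⟩ : ∃ ζ : ℂ, IsPrimitiveRoot ζ q := ⟨_, Complex.isPrimitiveRoot_exp q hq.ne'⟩
  have hroots (m : ℕ) :
      (((∑ i ∈ range (m / q + 1), (m.choose (i * q + r) : ℝ)) / 2 ^ m : ℝ) : ℂ) =
      ∑ j ∈ range q, ζ ^ (j * (q - r)) / q * ((1 + ζ ^ j) / 2) ^ m := by
    have hq' : (q : ℂ) ≠ 0 := by exact_mod_cast hq.ne'
    simp_rw [div_pow, div_mul_div_comm, ← sum_div]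
    rw [hζ.sum_range_pow_mul_one_add_pow hr m (Nat.lt_div_mul_add hq), ← add_one_mul,
      ← sum_range_mul_add_eq_sum_filter_mod hr]
    push_cast
    field_simp
  rw [← tendsto_ofReal_iff]
  simp_rw [hroots]
  simpa using hζ.tendsto_sum_mul_one_add_div_two_pow hq fun j ↦ ζ ^ (j * (q - r)) / q

open Filter in
theorem binomial_residue_classes_balanced_general (q r : ℕ) (hr : r < q) :
    Tendsto (fun n : ℕ =>
        (∑ i ∈ Finset.range ((n - 1) / q + 1), ((n - 1).choose (i * q + r) : ℝ)) /
          2 ^ (n - 1))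
      atTop (nhds (1 / q)) :=
  (tendsto_sum_choose_mul_add_div_two_pow hr).comp (tendsto_sub_atTop_nat 1)

open Filter in
theorem binomial_residue_classes_balanced (q r : ℕ) (hq : 2 ≤ q) (hr : r < q) :
    Tendsto (fun n : ℕ =>
        (∑ i ∈ Finset.range ((n - 1) / q + 1), ((n - 1).choose (i * q + r) : ℝ)) /
          2 ^ (n - 1))
      atTop (nhds (1 / q)) :=
  binomial_residue_classes_balanced_general q r hr
end

section
/- Let w ≠ 1 be a complex number with |w| = 1 and suppose gcd(s_1, ..., s_{k-1}) = 1. Then every complex root y of f_w(z) = z^m − ∑_{i=1}^{k-1} z^{m−s_i} − w satisfies |y| < α, where α is the unique positive real root of f_1(z) = z^m − ∑_{i=1}^{k-1} z^{m−s_i} − 1. -/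
/-!
Divide the equation by `y ^ m`: with `v = α / y` it becomes
`∑ i, α⁻¹ ^ s i * v ^ s i + α⁻¹ ^ m * (w * v ^ m) = 1`, while the equation for `α` says that the
positive weights `α⁻¹ ^ s i` and `α⁻¹ ^ m` add up to `1`. If `‖y‖ ≥ α`, then `‖v‖ ≤ 1`, and a convex
combination of points of the closed unit disc equals `1` only if every point is `1`. Hence
`v ^ s i = 1` for all `i`, so `v = 1` because the `s i` are coprime, and then `w = w * v ^ m = 1`.
-/

open Finset

namespace Complex

lemma eq_one_of_re_eq_one_of_norm_le_one {z : ℂ} (hre : z.re = 1) (hnorm : ‖z‖ ≤ 1) :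
    z = 1 := by
  have him : z.im = 0 := abs_re_eq_norm.mp <|
    le_antisymm (abs_re_le_norm z) (by rw [hre, abs_one]; exact hnorm)
  exact ext hre him

lemma eq_one_of_sum_mul_add_mul_eq_one {ι : Type*} {t : Finset ι} {c : ι → ℝ} {z : ι → ℂ}
    {c₀ : ℝ} {z₀ : ℂ} (hc : ∀ j ∈ t, 0 < c j) (hc₀ : 0 < c₀) (hz : ∀ j ∈ t, ‖z j‖ ≤ 1)
    (hz₀ : ‖z₀‖ ≤ 1) (hc_sum : ∑ j ∈ t, c j + c₀ = 1) (h : ∑ j ∈ t, c j * z j + c₀ * z₀ = 1) :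
    (∀ j ∈ t, z j = 1) ∧ z₀ = 1 := by
  have hdefect_nonneg {a : ℝ} {x : ℂ} (ha : 0 < a) (hx : ‖x‖ ≤ 1) : 0 ≤ a * (1 - x.re) :=
    mul_nonneg ha.le (sub_nonneg.mpr ((re_le_norm x).trans hx))
  have heq_one {a : ℝ} {x : ℂ} (ha : 0 < a) (hx : ‖x‖ ≤ 1) (h0 : a * (1 - x.re) = 0) : x = 1 :=
    eq_one_of_re_eq_one_of_norm_le_one (by linarith [(mul_eq_zero.mp h0).resolve_left ha.ne']) hx
  have hdefect : ∑ j ∈ t, c j * (1 - (z j).re) + c₀ * (1 - z₀.re) = 0 := by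
    have hre := congrArg re h
    simp only [add_re, re_sum, re_ofReal_mul, one_re] at hre
    simp only [mul_sub, mul_one, sum_sub_distrib]
    linarith
  obtain ⟨hsum0, h0⟩ := (add_eq_zero_iff_of_nonneg
    (sum_nonneg fun j hj => hdefect_nonneg (hc j hj) (hz j hj)) (hdefect_nonneg hc₀ hz₀)).mp hdefect
  have hterms := (sum_eq_zero_iff_of_nonneg fun j hj => hdefect_nonneg (hc j hj) (hz j hj)).mp hsum0
  exact ⟨fun j hj => heq_one (hc j hj) (hz j hj) (hterms j hj), heq_one hc₀ hz₀ h0⟩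

end Complex

lemma eq_one_of_forall_pow_eq_one {M ι : Type*} [Monoid M] {t : Finset ι} {s : ι → ℕ}
    (hgcd : t.gcd s = 1) {x : M} (h : ∀ i ∈ t, x ^ s i = 1) : x = 1 := by
  have : orderOf x ∣ t.gcd s := dvd_gcd fun i hi => orderOf_dvd_of_pow_eq_one (h i hi)
  rwa [hgcd, Nat.dvd_one, orderOf_eq_one_iff] at this

lemma sum_inv_pow_add_mul_inv_pow_eq_one {K ι : Type*} [Field K] {t : Finset ι} {m : ℕ}
    {s : ι → ℕ} (hs : ∀ i ∈ t, s i ≤ m) {x c : K} (hx : x ≠ 0)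
    (h : x ^ m - ∑ i ∈ t, x ^ (m - s i) - c = 0) :
    ∑ i ∈ t, (x ^ s i)⁻¹ + c * (x ^ m)⁻¹ = 1 := by
  have hsum : ∑ i ∈ t, x ^ (m - s i) = x ^ m * ∑ i ∈ t, (x ^ s i)⁻¹ := by
    rw [mul_sum]
    exact sum_congr rfl fun i hi => pow_sub₀ x hx (hs i hi)
  rw [show c = x ^ m * (1 - ∑ i ∈ t, (x ^ s i)⁻¹) by linear_combination -h - hsum]
  field_simp
  ring

theorem f_w_roots_smaller_modulus_general (k m : ℕ)
    (s : Fin (k - 1) → ℕ)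
    (hlt : ∀ i, s i < m)
    (hgcd : Finset.univ.gcd s = 1)
    (w : ℂ) (hw1 : w ≠ 1) (hwabs : ‖w‖ = 1)
    (α : ℝ) (hα : 0 < α ∧ α ^ m - (∑ i, α ^ (m - s i)) - 1 = 0)
    (y : ℂ) (hy : y ^ m - (∑ i, y ^ (m - s i)) - w = 0) :
    ‖y‖ < α := by
  obtain ⟨hα0, hαeq⟩ := hα
  by_contra! hαy
  have hy0 : y ≠ 0 := norm_pos_iff.mp (hα0.trans_le hαy)
  set v : ℂ := α / y
  have hv : ‖v‖ ≤ 1 := by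
    rw [norm_div, Complex.norm_real, Real.norm_of_nonneg hα0.le]
    exact div_le_one_of_le₀ hαy (norm_nonneg y)
  have hweights := sum_inv_pow_add_mul_inv_pow_eq_one (fun i _ => (hlt i).le) hα0.ne' hαeq
  have hroot := sum_inv_pow_add_mul_inv_pow_eq_one (fun i _ => (hlt i).le) hy0 hy
  have hscale (n : ℕ) : ((α : ℂ) ^ n)⁻¹ * v ^ n = (y ^ n)⁻¹ := by
    rw [div_pow, div_eq_mul_inv, inv_mul_cancel_left₀ (pow_ne_zero n (mod_cast hα0.ne'))]
  obtain ⟨hvs, hwv⟩ := Complex.eq_one_of_sum_mul_add_mul_eq_one (t := univ)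
    (c := fun i => (α ^ s i)⁻¹) (z := fun i => v ^ s i) (c₀ := (α ^ m)⁻¹) (z₀ := w * v ^ m)
    (fun i _ => by positivity) (by positivity)
    (fun i _ => by simpa using pow_le_one₀ (norm_nonneg v) hv)
    (by simpa [hwabs] using pow_le_one₀ (norm_nonneg v) hv) (by simpa using hweights)
    (by simpa only [Complex.ofReal_inv, Complex.ofReal_pow, mul_left_comm _ w, hscale] using hroot)
  have hv1 : v = 1 := eq_one_of_forall_pow_eq_one hgcd fun i _ => hvs i (mem_univ i)
  exact hw1 (by simpa [hv1] using hwv)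

theorem f_w_roots_smaller_modulus (k m : ℕ) (hk : 2 ≤ k)
    (s : Fin (k - 1) → ℕ) (hmono : StrictMono s)
    (hpos : ∀ i, 0 < s i) (hlt : ∀ i, s i < m)
    (hgcd : Finset.univ.gcd s = 1)
    (w : ℂ) (hw1 : w ≠ 1) (hwabs : ‖w‖ = 1)
    (α : ℝ) (hα : 0 < α ∧ α ^ m - (∑ i, α ^ (m - s i)) - 1 = 0)
    (y : ℂ) (hy : y ^ m - (∑ i, y ^ (m - s i)) - w = 0) :
    ‖y‖ < α :=
  f_w_roots_smaller_modulus_general k m s hlt hgcd w hw1 hwabs α hα y hy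
end

section
/- Every complex root y of f_w(z) = z^m − ∑_{i=1}^{k-1} z^{m−s_i} − w with |w| = 1 satisfies |y| ≤ α, where α is the unique positive real root of f_1. -/
/-!
Taking norms in `y ^ m = ∑ i, y ^ (m - s i) + w` gives `‖y‖ ^ m ≤ ∑ i, ‖y‖ ^ (m - s i) + 1`.
If `r > α`, write `r = t α` with `t > 1`: every term `r ^ (m - s i) = t ^ (m - s i) α ^ (m - s i)` is
at most `t ^ m α ^ (m - s i)` and `1 < t ^ m`, so the right-hand side is strictly below
`t ^ m (∑ i, α ^ (m - s i) + 1) = t ^ m α ^ m = r ^ m`.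
-/

open Finset

theorem norm_pow_le_sum_norm_pow_add_norm {𝕜 ι : Type*} [NormedDivisionRing 𝕜]
    (t : Finset ι) (e : ι → ℕ) (m : ℕ) (y w : 𝕜) (h : y ^ m = ∑ i ∈ t, y ^ e i + w) :
    ‖y‖ ^ m ≤ ∑ i ∈ t, ‖y‖ ^ e i + ‖w‖ :=
  calc ‖y‖ ^ m = ‖∑ i ∈ t, y ^ e i + w‖ := by rw [← norm_pow, h]
    _ ≤ ‖∑ i ∈ t, y ^ e i‖ + ‖w‖ := norm_add_le _ _
    _ ≤ ∑ i ∈ t, ‖y‖ ^ e i + ‖w‖ := by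
      gcongr
      simpa only [norm_pow] using norm_sum_le t fun i ↦ y ^ e i

theorem le_of_pow_le_sum_pow_add_one {ι : Type*} (t : Finset ι) (e : ι → ℕ) {m : ℕ}
    (hm : m ≠ 0) (he : ∀ i ∈ t, e i ≤ m) {α r : ℝ} (hα : 0 < α)
    (hαroot : α ^ m = ∑ i ∈ t, α ^ e i + 1) (hr : r ^ m ≤ ∑ i ∈ t, r ^ e i + 1) :
    r ≤ α := by
  by_contra! hαr
  have ht : 1 < r / α := (one_lt_div hα).2 hαr
  have hscale (n : ℕ) : r ^ n = (r / α) ^ n * α ^ n := by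
    rw [← mul_pow, div_mul_cancel₀ _ hα.ne']
  have hterm : ∀ i ∈ t, r ^ e i ≤ (r / α) ^ m * α ^ e i := fun i hi ↦ by
    rw [hscale]
    gcongr
    exacts [ht.le, he i hi]
  have : ∑ i ∈ t, r ^ e i + 1 < r ^ m :=
    calc ∑ i ∈ t, r ^ e i + 1 < ∑ i ∈ t, (r / α) ^ m * α ^ e i + (r / α) ^ m :=
          add_lt_add_of_le_of_lt (sum_le_sum hterm) (one_lt_pow₀ ht hm)
      _ = r ^ m := by rw [hscale, hαroot, ← mul_sum, mul_add, mul_one]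
  linarith

theorem f_w_roots_le_alpha_general (k m : ℕ) (hk : 2 ≤ k)
    (s : Fin (k - 1) → ℕ)
    (hlt : ∀ i, s i < m)
    (w : ℂ) (hwabs : ‖w‖ = 1)
    (α : ℝ) (hα : 0 < α ∧ α ^ m - (∑ i, α ^ (m - s i)) - 1 = 0)
    (y : ℂ) (hy : y ^ m - (∑ i, y ^ (m - s i)) - w = 0) :
    ‖y‖ ≤ α := by
  have hm : m ≠ 0 := (hlt ⟨0, by omega⟩).ne_bot
  have hnorm := norm_pow_le_sum_norm_pow_add_norm univ (fun i ↦ m - s i) m y w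
    (by linear_combination hy)
  rw [hwabs] at hnorm
  exact le_of_pow_le_sum_pow_add_one univ (fun i ↦ m - s i) hm (fun i _ ↦ Nat.sub_le m (s i))
    hα.1 (by linarith [hα.2]) hnorm

theorem f_w_roots_le_alpha (k m : ℕ) (hk : 2 ≤ k)
    (s : Fin (k - 1) → ℕ) (hmono : StrictMono s)
    (hpos : ∀ i, 0 < s i) (hlt : ∀ i, s i < m)
    (w : ℂ) (hwabs : ‖w‖ = 1)
    (α : ℝ) (hα : 0 < α ∧ α ^ m - (∑ i, α ^ (m - s i)) - 1 = 0)
    (y : ℂ) (hy : y ^ m - (∑ i, y ^ (m - s i)) - w = 0) :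
    ‖y‖ ≤ α :=
  f_w_roots_le_alpha_general k m hk s hlt w hwabs α hα y hy
end

section
/- Let S be a finite set of positive integers with |S| = k. Then the sequence A_{S,n} of the number of compositions of n with parts in S does not satisfy any linear recurrence relation with constant coefficients of degree less than k. -/
/-!
The generating function `F = ∑ Aₙ Xⁿ` satisfies `F * (1 - ∑_{s ∈ S} X ^ s) = 1`. A recurrence
`Aₙ = ∑_{i=1}^d cᵢ Aₙ₋ᵢ` valid for large `n` makes `F * Q` a polynomial `G`, where
`Q = 1 - ∑ cᵢ X ^ i`; hence `Q = G * (1 - ∑_{s ∈ S} X ^ s)`, and since `Q ≠ 0`,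
`d ≥ deg Q ≥ deg (1 - ∑_{s ∈ S} X ^ s) = max S ≥ |S|`.
-/

/-- The number of compositions of `n` with all parts in `S`. -/
noncomputable def compCount (S : Finset ℕ) (n : ℕ) : ℕ :=
  Nat.card {l : List ℕ // l.sum = n ∧ ∀ p ∈ l, p ∈ S}

open Polynomial
open scoped PowerSeries

lemma PowerSeries.coe_trunc_eq_self {R : Type*} [Semiring R] {f : R⟦X⟧} {M : ℕ}
    (hf : ∀ n, M ≤ n → PowerSeries.coeff n f = 0) : (PowerSeries.trunc M f : R⟦X⟧) = f := by
  ext n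
  rw [Polynomial.coeff_coe, PowerSeries.coeff_trunc]
  split_ifs with hn
  · rfl
  · exact (hf n (not_lt.1 hn)).symm

lemma card_le_natDegree_of_coeff_ne_zero {R : Type*} [Semiring R] {p : R[X]} {S : Finset ℕ}
    (hpos : ∀ s ∈ S, 0 < s) (hS : ∀ s ∈ S, p.coeff s ≠ 0) : S.card ≤ p.natDegree :=
  calc S.card ≤ (Finset.Icc 1 p.natDegree).card := Finset.card_le_card fun s hs =>
        Finset.mem_Icc.2 ⟨hpos s hs, le_natDegree_of_ne_zero (hS s hs)⟩
    _ = p.natDegree := by simp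

section Recurrence

variable {R : Type*} [CommRing R] {d : ℕ} (c : Fin d → R)

/-- `X ^ d` times the characteristic polynomial of the recurrence with coefficients `c`,
evaluated at `X⁻¹`. -/
noncomputable def recurrencePoly : R[X] :=
  1 - ∑ i : Fin d, C (c i) * X ^ ((i : ℕ) + 1)

lemma coeff_recurrencePoly_zero : (recurrencePoly c).coeff 0 = 1 := by
  simp [recurrencePoly, coeff_X_pow]

lemma recurrencePoly_ne_zero [Nontrivial R] : recurrencePoly c ≠ 0 := fun h => by
  simpa [h] using coeff_recurrencePoly_zero c

lemma natDegree_recurrencePoly_le : (recurrencePoly c).natDegree ≤ d := by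
  refine (natDegree_sub_le _ _).trans
    (max_le (by simp) (natDegree_sum_le_of_forall_le _ _ fun i _ => ?_))
  exact (natDegree_C_mul_le _ _).trans (natDegree_X_pow_le _ |>.trans i.2)

lemma coeff_mk_mul_recurrencePoly (a : ℕ → R) {t : ℕ} (ht : d ≤ t) :
    PowerSeries.coeff t (PowerSeries.mk a * (recurrencePoly c : R⟦X⟧)) =
      a t - ∑ i : Fin d, c i * a (t - ((i : ℕ) + 1)) := by
  rw [recurrencePoly, coe_sub, coe_one, ← coeToPowerSeries.ringHom_apply, map_sum, mul_sub,
    mul_one, Finset.mul_sum, map_sub, map_sum, PowerSeries.coeff_mk]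
  congr 1
  refine Finset.sum_congr rfl fun i _ => ?_
  rw [coeToPowerSeries.ringHom_apply, coe_mul, coe_C, coe_pow, coe_X, mul_left_comm,
    PowerSeries.coeff_C_mul, PowerSeries.coeff_mul_X_pow', if_pos (by omega),
    PowerSeries.coeff_mk]

variable {c} {a : ℕ → R} {N : ℕ}

theorem dvd_recurrencePoly {p : R[X]} (hp : PowerSeries.mk a * (p : R⟦X⟧) = 1)
    (hrec : ∀ n, N ≤ n → a n = ∑ i : Fin d, c i * a (n - ((i : ℕ) + 1))) :
    p ∣ recurrencePoly c := by
  set G := PowerSeries.trunc (max N d) (PowerSeries.mk a * (recurrencePoly c : R⟦X⟧))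
  have hG : (G : R⟦X⟧) = PowerSeries.mk a * (recurrencePoly c : R⟦X⟧) :=
    PowerSeries.coe_trunc_eq_self fun n hn => by
      rw [coeff_mk_mul_recurrencePoly c a (le_of_max_le_right hn), ← hrec n (le_of_max_le_left hn),
        sub_self]
  refine ⟨G, coe_inj.1 ?_⟩
  rw [coe_mul, hG, ← mul_assoc, mul_comm (p : R⟦X⟧), hp, one_mul]

theorem natDegree_le_of_recurrence [IsDomain R] {p : R[X]}
    (hp : PowerSeries.mk a * (p : R⟦X⟧) = 1)
    (hrec : ∀ n, N ≤ n → a n = ∑ i : Fin d, c i * a (n - ((i : ℕ) + 1))) :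
    p.natDegree ≤ d :=
  (natDegree_le_of_dvd (dvd_recurrencePoly hp hrec) (recurrencePoly_ne_zero c)).trans
    (natDegree_recurrencePoly_le c)

end Recurrence

section Compositions

variable {S : Finset ℕ}

lemma eq_nil_of_sum_eq_zero (hpos : ∀ s ∈ S, 0 < s) {l : List ℕ} (hsum : l.sum = 0)
    (hparts : ∀ p ∈ l, p ∈ S) : l = [] :=
  List.eq_nil_iff_forall_not_mem.2 fun p hp =>
    (hpos p (hparts p hp)).ne' (List.sum_eq_zero_iff.1 hsum p hp)

lemma finite_compositions (hpos : ∀ s ∈ S, 0 < s) (n : ℕ) :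
    Finite {l : List ℕ // l.sum = n ∧ ∀ p ∈ l, p ∈ S} :=
  Finite.of_injective (fun l => (⟨l.1, fun hp => hpos _ (l.2.2 _ hp), l.2.1⟩ : Composition n))
    fun _ _ h => Subtype.ext (congrArg Composition.blocks h)

lemma compCount_zero (hpos : ∀ s ∈ S, 0 < s) : compCount S 0 = 1 := by
  rw [compCount, Nat.card_eq_one_iff_unique]
  refine ⟨⟨fun l l' => Subtype.ext ?_⟩, ⟨⟨[], by simp⟩⟩⟩
  rw [eq_nil_of_sum_eq_zero hpos l.2.1 l.2.2, eq_nil_of_sum_eq_zero hpos l'.2.1 l'.2.2]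

lemma compCount_eq_sum (hpos : ∀ s ∈ S, 0 < s) {n : ℕ} (hn : 0 < n) :
    compCount S n = ∑ s ∈ S with s ≤ n, compCount S (n - s) := by
  classical
  have := finite_compositions hpos
  let cons (x : Σ s : {s // s ∈ S.filter (· ≤ n)},
      {l : List ℕ // l.sum = n - s ∧ ∀ p ∈ l, p ∈ S}) :
      {l : List ℕ // l.sum = n ∧ ∀ p ∈ l, p ∈ S} :=
    ⟨x.1.1 :: x.2.1, by
      have hs := Finset.mem_filter.1 x.1.2
      have hsum := x.2.2.1
      exact ⟨by rw [List.sum_cons, hsum]; omega, List.forall_mem_cons.2 ⟨hs.1, x.2.2.2⟩⟩⟩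
  have hcons : Function.Bijective cons := by
    constructor
    · rintro ⟨⟨s, hs⟩, l, hl⟩ ⟨⟨s', hs'⟩, l', hl'⟩ h
      obtain ⟨rfl, rfl⟩ := List.cons_eq_cons.1 (Subtype.ext_iff.1 h)
      rfl
    · rintro ⟨_ | ⟨s, l⟩, hsum, hparts⟩
      · rw [List.sum_nil] at hsum; omega
      · simp only [List.sum_cons, List.mem_cons, forall_eq_or_imp] at hsum hparts
        exact ⟨⟨⟨s, Finset.mem_filter.2 ⟨hparts.1, by omega⟩⟩, l, by dsimp only; omega, hparts.2⟩,
          rfl⟩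
  rw [compCount, ← Nat.card_eq_of_bijective cons hcons, Nat.card_sigma]
  exact Finset.sum_coe_sort _ fun s => compCount S (n - s)

theorem mk_compCount_mul_one_sub_sum_X_pow (R : Type*) [CommRing R] (hpos : ∀ s ∈ S, 0 < s) :
    PowerSeries.mk (fun n => (compCount S n : R)) * ↑(1 - ∑ s ∈ S, X ^ s : R[X]) = 1 := by
  ext n
  rw [coe_sub, coe_one, ← coeToPowerSeries.ringHom_apply, map_sum]
  simp only [map_pow, coeToPowerSeries.ringHom_apply, coe_X, mul_sub, mul_one, Finset.mul_sum,
    map_sub, map_sum, PowerSeries.coeff_mul_X_pow', PowerSeries.coeff_mk, PowerSeries.coeff_one]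
  rcases n.eq_zero_or_pos with rfl | hn
  · simp [compCount_zero hpos, show 0 ∉ S from fun h => (hpos 0 h).false]
  · simp [compCount_eq_sum hpos hn, hn.ne', Finset.sum_filter]

end Compositions

theorem no_short_recurrence (S : Finset ℕ) (hpos : ∀ s ∈ S, 0 < s)
    (k : ℕ) (hk : S.card = k) :
    ¬ ∃ d : ℕ, d < k ∧ ∃ c : Fin d → ℂ, ∃ N : ℕ,
      ∀ n, N ≤ n → (compCount S n : ℂ) =
        ∑ i : Fin d, c i * (compCount S (n - ((i : ℕ) + 1)) : ℂ) := by
  rintro ⟨d, hd, c, N, hrec⟩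
  have hdeg : (1 - ∑ s ∈ S, X ^ s : ℂ[X]).natDegree ≤ d :=
    natDegree_le_of_recurrence (mk_compCount_mul_one_sub_sum_X_pow ℂ hpos) hrec
  have hcard : S.card ≤ (1 - ∑ s ∈ S, X ^ s : ℂ[X]).natDegree :=
    card_le_natDegree_of_coeff_ne_zero hpos fun s hs => by
      simp [coeff_one, coeff_X_pow, hs, (hpos s hs).ne']
  omega
end

section
/- Let q ≥ 2 and 0 ≤ r < q be integers. Let p_{n,r} = A_{S,n,r}/A_{S,n} be the probability that a uniformly random composition of n with parts in S has multiplicity of m congruent to r mod q. Then lim_{n→∞} p_{n,r} = 1/q. -/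
/-!
Write `a_n(ω) = ∑ ω ^ m(a)` over the compositions `a` of `n` with parts in `S`, so that
`a_n(1) = A_{S,n}`. By the roots-of-unity filter, `q A_{S,n,r} = ∑_{d<q} ζ^{-rd} a_n(ζ^d)` for a
primitive `q`-th root of unity `ζ`, so it suffices that `a_n(ω) = o(A_{S,n})` for `|ω| = 1`,
`ω ≠ 1`. Cutting a composition at its shortest prefix of sum `≥ N` gives the renewal identity
`a_n(ω) = ∑_{N ≤ j < N+m} E_j(ω) a_{n-j}(ω)`, where `E_j(ω)` sums `ω ^ m(u)` over those prefixes
`u` of sum `j`. As the parts other than `m` have gcd `1`, for large `N` each such `j` is reached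
both by a prefix with one part `m` and by one with two, so the unimodular terms of `E_j(ω)` are
not all aligned and `|E_j(ω)| ≤ θ E_j(1)` for some `θ < 1`. Iterating the renewal identity gives
`|a_n(ω)| ≤ θ ^ ⌊n / (N + m)⌋ A_{S,n}`.
-/

open Finset Filter Topology

theorem List.exists_crossing_split {N : ℕ} (hN : 0 < N) :
    ∀ {l : List ℕ}, N ≤ l.sum →
      ∃ u v, l = u ++ v ∧ u ≠ [] ∧ u.dropLast.sum < N ∧ N ≤ u.sum
  | [], h => by simp at h; omega
  | a :: l, h => by
    by_cases ha : N ≤ a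
    · exact ⟨[a], l, rfl, by simp, by simpa using hN, by simpa using ha⟩
    · obtain ⟨u, v, rfl, hu, hlt, hle⟩ :=
        exists_crossing_split (N := N - a) (by omega) (l := l) (by simp at h; omega)
      refine ⟨a :: u, v, rfl, by simp, ?_, by simp; omega⟩
      rw [List.dropLast_cons_of_ne_nil hu, List.sum_cons]
      omega

theorem List.length_eq_of_append_eq_of_crossing {N : ℕ} {u u' v v' : List ℕ}
    (hu : N ≤ u.sum) (hu' : u'.dropLast.sum < N) (hlen : u.length ≤ u'.length)
    (huv : u ++ v = u' ++ v') : u.length = u'.length := by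
  by_contra hne
  have hpre : u <+: u' :=
    List.prefix_of_prefix_length_le (List.prefix_append u v) (huv ▸ List.prefix_append u' v') hlen
  have : u <+: u'.dropLast :=
    List.prefix_of_prefix_length_le hpre u'.dropLast_prefix (by simp; omega)
  have := this.sublist.sum_le_sum (fun _ _ => Nat.zero_le _)
  omega

theorem List.append_inj_of_crossing {N : ℕ} {u u' v v' : List ℕ}
    (hu : N ≤ u.sum) (hu' : N ≤ u'.sum) (hdu : u.dropLast.sum < N) (hdu' : u'.dropLast.sum < N)
    (huv : u ++ v = u' ++ v') : u = u' ∧ v = v' := by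
  refine List.append_inj huv ?_
  rcases le_total u.length u'.length with h | h
  · exact length_eq_of_append_eq_of_crossing hu hdu' h huv
  · exact (length_eq_of_append_eq_of_crossing hu' hdu h huv.symm).symm

theorem List.sum_lt_add_of_dropLast_sum_lt {N m : ℕ} {u : List ℕ} (hne : u ≠ [])
    (hmax : ∀ p ∈ u, p ≤ m) (hlt : u.dropLast.sum < N) : u.sum < N + m := by
  have hlast := hmax _ (u.getLast_mem hne)
  rw [← List.dropLast_append_getLast hne, List.sum_append, List.sum_singleton]
  omega

theorem norm_sum_lt_sum_norm_of_not_sameRay {ι E : Type*} [NormedAddCommGroup E]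
    [NormedSpace ℝ E] [StrictConvexSpace ℝ E] {s : Finset ι} {f : ι → E} {x y : ι} (hx : x ∈ s)
    (hy : y ∈ s) (h : ¬SameRay ℝ (f x) (f y)) : ‖∑ i ∈ s, f i‖ < ∑ i ∈ s, ‖f i‖ := by
  classical
  have hxy : x ≠ y := by rintro rfl; exact h (SameRay.refl _)
  have hsub : {x, y} ⊆ s := insert_subset hx (singleton_subset_iff.mpr hy)
  rw [← sum_sdiff hsub, ← sum_sdiff hsub, sum_pair hxy, sum_pair hxy]
  calc ‖∑ i ∈ s \ {x, y}, f i + (f x + f y)‖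
      ≤ ‖∑ i ∈ s \ {x, y}, f i‖ + ‖f x + f y‖ := norm_add_le _ _
    _ < ∑ i ∈ s \ {x, y}, ‖f i‖ + (‖f x‖ + ‖f y‖) :=
      add_lt_add_of_le_of_lt (norm_sum_le _ _) (norm_add_lt_of_not_sameRay h)

theorem Finset.exists_lt_one_forall_le_mul {ι : Type*} {s : Finset ι} {x y : ι → ℝ}
    (hx : ∀ i ∈ s, 0 ≤ x i) (hxy : ∀ i ∈ s, x i < y i) :
    ∃ θ : ℝ, 0 ≤ θ ∧ θ < 1 ∧ ∀ i ∈ s, x i ≤ θ * y i := by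
  have hy : ∀ i ∈ s, 0 < y i := fun i hi => (hx i hi).trans_lt (hxy i hi)
  set θ : NNReal := s.sup fun i => (x i / y i).toNNReal
  refine ⟨θ, θ.coe_nonneg, ?_, fun i hi => ?_⟩
  · rw [NNReal.coe_lt_one, Finset.sup_lt_iff zero_lt_one]
    intro i hi
    rw [Real.toNNReal_lt_one, div_lt_one (hy i hi)]
    exact hxy i hi
  · rw [← div_le_iff₀ (hy i hi)]
    exact (Real.le_coe_toNNReal _).trans
      (NNReal.coe_le_coe.mpr (le_sup (f := fun i => (x i / y i).toNNReal) hi))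

theorem norm_le_pow_mul_of_renewal {R : Type*} [SeminormedRing R] {c e : ℕ → R} {a p : ℕ → ℝ}
    {J : Finset ℕ} {L : ℕ} {θ : ℝ} (hJ : ∀ j ∈ J, j ≤ L)
    (hc : ∀ n, L ≤ n → c n = ∑ j ∈ J, e j * c (n - j))
    (ha : ∀ n, L ≤ n → a n = ∑ j ∈ J, p j * a (n - j))
    (he : ∀ j ∈ J, ‖e j‖ ≤ θ * p j) (hca : ∀ n, ‖c n‖ ≤ a n) :
    ∀ t n, L * t ≤ n → ‖c n‖ ≤ θ ^ t * a n := by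
  intro t
  induction t with
  | zero => simpa using hca
  | succ t ih =>
    intro n hn
    have hLn : L ≤ n := le_trans (Nat.le_mul_of_pos_right L t.succ_pos) hn
    rw [hc n hLn, ha n hLn, mul_sum]
    refine (norm_sum_le _ _).trans (sum_le_sum fun j hj => ?_)
    have hnj : L * t ≤ n - j := by have := hJ j hj; rw [Nat.mul_succ] at hn; omega
    calc ‖e j * c (n - j)‖ ≤ ‖e j‖ * ‖c (n - j)‖ := norm_mul_le _ _
      _ ≤ (θ * p j) * (θ ^ t * a (n - j)) :=
        mul_le_mul (he j hj) (ih _ hnj) (norm_nonneg _) ((norm_nonneg _).trans (he j hj))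
      _ = θ ^ (t + 1) * (p j * a (n - j)) := by ring

theorem tendsto_div_zero_of_norm_le_pow_mul {c : ℕ → ℂ} {a : ℕ → ℕ} {θ : ℝ} {L : ℕ}
    (hL : 0 < L) (hθ : 0 ≤ θ) (hθ1 : θ < 1) (h : ∀ t n, L * t ≤ n → ‖c n‖ ≤ θ ^ t * a n) :
    Tendsto (fun n => c n / a n) atTop (𝓝 0) := by
  refine squeeze_zero_norm (fun n => ?_) ((tendsto_pow_atTop_nhds_zero_of_lt_one hθ hθ1).comp
    (Nat.tendsto_div_const_atTop hL.ne'))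
  rw [norm_div, Complex.norm_natCast]
  exact div_le_of_le_mul₀ (Nat.cast_nonneg _) (pow_nonneg hθ _) (h (n / L) n (Nat.mul_div_le n L))

theorem geom_sum_eq_ite_of_pow_eq_one {K : Type*} [CommRing K] [IsDomain K] [DecidableEq K]
    {w : K} {q : ℕ} (hw : w ^ q = 1) : ∑ d ∈ range q, w ^ d = if w = 1 then (q : K) else 0 := by
  split_ifs with h
  · simp [h]
  · have := geom_sum_mul w q
    rw [hw, sub_self] at this
    exact (mul_eq_zero.mp this).resolve_right (sub_ne_zero.mpr h)

theorem IsPrimitiveRoot.natCast_mul_card_filter_mod_eq {K α : Type*} [CommRing K] [IsDomain K]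
    {ζ : K} {q r : ℕ} (hζ : IsPrimitiveRoot ζ q) (hr : r < q) (s : Finset α) (g : α → ℕ) :
    (q : K) * #{x ∈ s | g x % q = r} =
      ∑ d ∈ range q, ζ ^ ((q - r) * d) * ∑ x ∈ s, (ζ ^ d) ^ g x := by
  classical
  have hroot : ∀ x, ((ζ ^ (g x + (q - r))) ^ q = 1) := fun x => by
    rw [← pow_mul, mul_comm, pow_mul, hζ.pow_eq_one, one_pow]
  have hone : ∀ x, ζ ^ (g x + (q - r)) = 1 ↔ g x % q = r := fun x => by
    rw [hζ.pow_eq_one_iff_dvd, ← Nat.add_sub_assoc hr.le, ← Nat.modEq_iff_dvd' (by omega),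
      Nat.ModEq, Nat.add_mod_right, Nat.mod_eq_of_lt hr, eq_comm]
  have hterm : ∀ x d, ζ ^ ((q - r) * d) * (ζ ^ d) ^ g x = (ζ ^ (g x + (q - r))) ^ d :=
    fun x d => by ring
  simp_rw [mul_sum, hterm]
  rw [sum_comm]
  simp_rw [geom_sum_eq_ite_of_pow_eq_one (hroot _), hone]
  rw [← sum_filter, sum_const, nsmul_eq_mul, mul_comm]

theorem Finset.eventually_exists_list_sum_eq {T : Finset ℕ} (hT : T.gcd id = 1) :
    ∀ᶠ n in atTop, ∃ w : List ℕ, (∀ p ∈ w, p ∈ T) ∧ w.sum = n := by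
  obtain ⟨N, hN⟩ := Nat.exists_mem_closure_of_ge (T : Set ℕ)
  have hgcd : Nat.setGcd (T : Set ℕ) ∣ 1 :=
    hT ▸ dvd_gcd fun t ht => Nat.setGcd_dvd_of_mem (by simpa using ht)
  filter_upwards [eventually_ge_atTop N] with n hn
  exact AddSubmonoid.exists_list_of_mem_closure (hN n hn (hgcd.trans (one_dvd n)))

-- Built from `Composition n` to get a `Finset`; only positive parts occur.
def compositionsWith (S : Finset ℕ) (n : ℕ) : Finset (List ℕ) :=
  ((univ : Finset (Composition n)).image Composition.blocks).filter (fun l => ∀ p ∈ l, p ∈ S)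

-- For `N ≤ j`: the compositions of `j` that are the shortest prefix of sum `≥ N` of any
-- composition they begin.
def crossingPrefixes (S : Finset ℕ) (N j : ℕ) : Finset (List ℕ) :=
  (compositionsWith S j).filter (fun u => u ≠ [] ∧ u.dropLast.sum < N)

theorem mem_compositionsWith {S : Finset ℕ} (hS : ∀ p ∈ S, 0 < p) {n : ℕ} {l : List ℕ} :
    l ∈ compositionsWith S n ↔ l.sum = n ∧ ∀ p ∈ l, p ∈ S := by
  simp only [compositionsWith, mem_filter, mem_image, mem_univ, true_and]
  constructor
  · rintro ⟨⟨c, rfl⟩, hl⟩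
    exact ⟨c.blocks_sum, hl⟩
  · rintro ⟨hsum, hl⟩
    exact ⟨⟨⟨l, fun hp => hS _ (hl _ hp), hsum⟩, rfl⟩, hl⟩

theorem mem_crossingPrefixes {S : Finset ℕ} (hS : ∀ p ∈ S, 0 < p) {N j : ℕ} {u : List ℕ} :
    u ∈ crossingPrefixes S N j ↔
      (u.sum = j ∧ ∀ p ∈ u, p ∈ S) ∧ u ≠ [] ∧ u.dropLast.sum < N := by
  rw [crossingPrefixes, mem_filter, mem_compositionsWith hS]

theorem sum_compositionsWith_eq_sum_crossing {R : Type*} [CommSemiring R] {S : Finset ℕ}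
    (hS : ∀ p ∈ S, 0 < p) {m : ℕ} (hmax : ∀ p ∈ S, p ≤ m) {N n : ℕ} (hN : 0 < N)
    (hn : N + m ≤ n) (f : List ℕ → R) (hf : ∀ u v, f (u ++ v) = f u * f v) :
    ∑ l ∈ compositionsWith S n, f l =
      ∑ j ∈ Ico N (N + m),
        (∑ u ∈ crossingPrefixes S N j, f u) * ∑ v ∈ compositionsWith S (n - j), f v := by
  simp_rw [sum_mul_sum, ← sum_product', ← hf]
  rw [← sum_sigma (Ico N (N + m)) (fun j => crossingPrefixes S N j ×ˢ compositionsWith S (n - j))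
    (fun x => f (x.2.1 ++ x.2.2))]
  symm
  refine sum_bij (fun x _ => x.2.1 ++ x.2.2) ?_ ?_ ?_ (fun _ _ => rfl)
  · rintro ⟨j, u, v⟩ hx
    simp only [mem_sigma, mem_Ico, mem_product, mem_crossingPrefixes hS,
      mem_compositionsWith hS] at hx ⊢
    obtain ⟨hj, ⟨⟨rfl, hu⟩, -⟩, hvs, hv⟩ := hx
    exact ⟨by rw [List.sum_append]; omega, List.forall_mem_append.mpr ⟨hu, hv⟩⟩
  · rintro ⟨j, u, v⟩ hx ⟨j', u', v'⟩ hx' heq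
    simp only [mem_sigma, mem_Ico, mem_product, mem_crossingPrefixes hS] at hx hx'
    obtain ⟨⟨hNu, -⟩, ⟨⟨rfl, -⟩, -, hdu⟩, -⟩ := hx
    obtain ⟨⟨hNu', -⟩, ⟨⟨rfl, -⟩, -, hdu'⟩, -⟩ := hx'
    obtain ⟨rfl, rfl⟩ := List.append_inj_of_crossing hNu hNu' hdu hdu' heq
    rfl
  · intro l hl
    obtain ⟨hsum, hl⟩ := (mem_compositionsWith hS).mp hl
    obtain ⟨u, v, rfl, hne, hlt, hle⟩ := List.exists_crossing_split hN (l := l) (by omega)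
    obtain ⟨hu, hv⟩ := List.forall_mem_append.mp hl
    refine ⟨⟨u.sum, u, v⟩, ?_, rfl⟩
    rw [mem_sigma, mem_Ico, mem_product, mem_crossingPrefixes hS, mem_compositionsWith hS]
    dsimp only
    rw [List.sum_append] at hsum
    exact ⟨⟨hle, List.sum_lt_add_of_dropLast_sum_lt hne (fun p hp => hmax p (hu p hp)) hlt⟩,
      ⟨⟨rfl, hu⟩, hne, hlt⟩, by omega, hv⟩

theorem mem_crossingPrefixes_append_replicate {S : Finset ℕ} (hS : ∀ p ∈ S, 0 < p) {m : ℕ}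
    (hmS : m ∈ S) {w : List ℕ} (hw : ∀ p ∈ w, p ∈ S) {k N : ℕ} (hk : 0 < k)
    (hN : w.sum + (k - 1) * m < N) :
    w ++ List.replicate k m ∈ crossingPrefixes S N (w.sum + k * m) := by
  obtain ⟨k, rfl⟩ := Nat.exists_eq_add_of_lt hk
  rw [mem_crossingPrefixes hS]
  refine ⟨⟨by simp, fun p hp => ?_⟩, by simp, ?_⟩
  · rcases List.mem_append.mp hp with hp | hp
    exacts [hw p hp, List.eq_of_mem_replicate hp ▸ hmS]
  · rw [List.replicate_succ', ← List.append_assoc, List.dropLast_concat]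
    simpa using hN

noncomputable def multiplicitySum (S : Finset ℕ) (m : ℕ) (ω : ℂ) (n : ℕ) : ℂ :=
  ∑ l ∈ compositionsWith S n, ω ^ l.count m

theorem norm_multiplicitySum_le_card {S : Finset ℕ} {m : ℕ} {ω : ℂ} (hω : ‖ω‖ = 1) (n : ℕ) :
    ‖multiplicitySum S m ω n‖ ≤ #(compositionsWith S n) :=
  (norm_sum_le _ _).trans_eq (by simp [hω])

section CrossingPrefixCounts

variable {S T : Finset ℕ} {m : ℕ} (hS : ∀ p ∈ S, 0 < p) (hmS : m ∈ S) (hTS : T ⊆ S)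
  (hmT : m ∉ T) {N₀ : ℕ} (hN₀ : ∀ n, N₀ ≤ n → ∃ w : List ℕ, (∀ p ∈ w, p ∈ T) ∧ w.sum = n)
include hS hmS hTS hmT hN₀

theorem exists_mem_crossingPrefixes_count_eq {N j k : ℕ} (hk : 0 < k) (hkj : N₀ + k * m ≤ j)
    (hjN : j < N + m) : ∃ u ∈ crossingPrefixes S N j, u.count m = k := by
  obtain ⟨w, hw, hsum⟩ := hN₀ (j - k * m) (by omega)
  have hmw : w.count m = 0 := List.count_eq_zero.mpr fun h => hmT (hw m h)
  refine ⟨w ++ List.replicate k m, ?_, by simp [hmw]⟩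
  have hkm : (k - 1) * m = k * m - m := Nat.sub_one_mul k m
  have hmk : m ≤ k * m := Nat.le_mul_of_pos_left m hk
  have := mem_crossingPrefixes_append_replicate hS hmS (fun p hp => hTS (hw p hp)) hk (N := N)
    (by omega)
  rwa [hsum, Nat.sub_add_cancel (by omega)] at this

theorem norm_sum_crossingPrefixes_lt_card {ω : ℂ} (hω : ‖ω‖ = 1) (hω1 : ω ≠ 1) {N j : ℕ}
    (hj : N₀ + 2 * m ≤ j) (hjN : j < N + m) :
    ‖∑ u ∈ crossingPrefixes S N j, ω ^ u.count m‖ < #(crossingPrefixes S N j) := by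
  obtain ⟨u₁, hu₁, hc₁⟩ :=
    exists_mem_crossingPrefixes_count_eq hS hmS hTS hmT hN₀ one_pos (by omega) hjN
  obtain ⟨u₂, hu₂, hc₂⟩ :=
    exists_mem_crossingPrefixes_count_eq hS hmS hTS hmT hN₀ two_pos hj hjN
  have hray : ¬SameRay ℝ (ω ^ u₁.count m) (ω ^ u₂.count m) := by
    intro h
    have hω0 : ω ≠ 0 := by rintro rfl; simp at hω
    have := h.eq_of_norm_eq (by simp [hω])
    rw [hc₁, hc₂, pow_one, sq] at this
    exact hω1 (mul_eq_left₀ hω0 |>.mp this.symm)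
  calc _ < ∑ u ∈ crossingPrefixes S N j, ‖ω ^ u.count m‖ :=
        norm_sum_lt_sum_norm_of_not_sameRay hu₁ hu₂ hray
    _ = #(crossingPrefixes S N j) := by simp [hω]

end CrossingPrefixCounts

theorem tendsto_multiplicitySum_div_card {S T : Finset ℕ} {m : ℕ} (hS : ∀ p ∈ S, 0 < p)
    (hmS : m ∈ S) (hmax : ∀ p ∈ S, p ≤ m) (hTS : T ⊆ S) (hmT : m ∉ T) (hT : T.gcd id = 1)
    {ω : ℂ} (hω : ‖ω‖ = 1) (hω1 : ω ≠ 1) :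
    Tendsto (fun n => multiplicitySum S m ω n / #(compositionsWith S n)) atTop (𝓝 0) := by
  obtain ⟨N₀, hN₀⟩ := eventually_atTop.mp (eventually_exists_list_sum_eq hT)
  have hm : 0 < m := hS m hmS
  -- large enough that each `j ∈ [N, N + m)` is the sum of a crossing prefix with one part `m`
  -- and of one with two
  set N := N₀ + 2 * m
  obtain ⟨θ, hθ0, hθ1, hθ⟩ := exists_lt_one_forall_le_mul (s := Ico N (N + m))
    (x := fun j => ‖∑ u ∈ crossingPrefixes S N j, ω ^ u.count m‖)
    (y := fun j => #(crossingPrefixes S N j)) (fun _ _ => norm_nonneg _) fun j hj =>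
      norm_sum_crossingPrefixes_lt_card hS hmS hTS hmT hN₀ hω hω1 (mem_Ico.mp hj).1
        (mem_Ico.mp hj).2
  have hc (n : ℕ) (hn : N + m ≤ n) : multiplicitySum S m ω n = ∑ j ∈ Ico N (N + m),
      (∑ u ∈ crossingPrefixes S N j, ω ^ u.count m) * multiplicitySum S m ω (n - j) :=
    sum_compositionsWith_eq_sum_crossing hS hmax (by omega) hn _
      fun u v => by rw [List.count_append, pow_add]
  have ha (n : ℕ) (hn : N + m ≤ n) : (#(compositionsWith S n) : ℝ) = ∑ j ∈ Ico N (N + m),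
      (#(crossingPrefixes S N j) : ℝ) * #(compositionsWith S (n - j)) := by
    simpa using sum_compositionsWith_eq_sum_crossing (R := ℝ) hS hmax (by omega) hn
      (fun _ => 1) fun _ _ => (mul_one 1).symm
  exact tendsto_div_zero_of_norm_le_pow_mul (by omega) hθ0 hθ1 <|
    norm_le_pow_mul_of_renewal (fun j hj => (mem_Ico.mp hj).2.le) hc ha hθ
      (norm_multiplicitySum_le_card hω)

theorem tendsto_card_filter_count_mod_div_card {S T : Finset ℕ} {m : ℕ} (hS : ∀ p ∈ S, 0 < p)
    (hmS : m ∈ S) (hmax : ∀ p ∈ S, p ≤ m) (hTS : T ⊆ S) (hmT : m ∉ T) (hT : T.gcd id = 1)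
    {q r : ℕ} (hr : r < q) :
    Tendsto (fun n => (#{l ∈ compositionsWith S n | l.count m % q = r} : ℝ) /
      #(compositionsWith S n)) atTop (𝓝 (1 / q)) := by
  set ζ := Complex.exp (2 * Real.pi * Complex.I / q)
  have hζ : IsPrimitiveRoot ζ q := Complex.isPrimitiveRoot_exp q (by omega)
  have hcard : ∀ᶠ n in atTop, (#(compositionsWith S n) : ℂ) ≠ 0 := by
    filter_upwards [eventually_exists_list_sum_eq hT] with n ⟨w, hw, hsum⟩
    exact Nat.cast_ne_zero.mpr (card_ne_zero_of_mem
      ((mem_compositionsWith hS).mpr ⟨hsum, fun p hp => hTS (hw p hp)⟩))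
  have hterm (d : ℕ) (hd : d ∈ range q) : Tendsto
      (fun n => multiplicitySum S m (ζ ^ d) n / #(compositionsWith S n)) atTop
      (𝓝 (if d = 0 then 1 else 0)) := by
    split_ifs with hd0
    · refine tendsto_const_nhds.congr' (hcard.mono fun n hn => ?_)
      simp [hd0, multiplicitySum, hn]
    · exact tendsto_multiplicitySum_div_card hS hmS hmax hTS hmT hT
        (by rw [norm_pow, hζ.norm'_eq_one (by omega), one_pow])
        (hζ.pow_ne_one_of_pos_of_lt hd0 (mem_range.mp hd))
  have hsum := (tendsto_finsetSum (range q) fun d hd =>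
    (hterm d hd).const_mul (ζ ^ ((q - r) * d))).const_mul (q : ℂ)⁻¹
  rw [← tendsto_ofReal_iff]
  convert hsum using 2
  · simp only [Complex.ofReal_div, Complex.ofReal_natCast, mul_div_assoc', ← sum_div,
      multiplicitySum, ← hζ.natCast_mul_card_filter_mod_eq hr]
    rw [inv_mul_cancel_left₀ (Nat.cast_ne_zero.mpr (by omega))]
  · simp

open Filter in
theorem multiplicity_balanced (k : ℕ) (hk : 2 ≤ k) (s : Fin k → ℕ)
    (hmono : StrictMono s) (hpos : ∀ i, 0 < s i)
    (hgcd : (Finset.univ.filter (fun i : Fin k => (i : ℕ) < k - 1)).gcd s = 1)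
    (S : Finset ℕ) (hS : S = Finset.image s Finset.univ)
    (m : ℕ) (hm : m = s ⟨k - 1, by omega⟩)
    (q : ℕ) (r : ℕ) (hr : r < q) :
    Tendsto (fun n : ℕ =>
        (Nat.card {l : List ℕ // l.sum = n ∧ (∀ p ∈ l, p ∈ S) ∧ l.count m % q = r} : ℝ) /
          (Nat.card {l : List ℕ // l.sum = n ∧ ∀ p ∈ l, p ∈ S} : ℝ))
      atTop (nhds (1 / q)) := by
  have hSpos : ∀ p ∈ S, 0 < p := by simpa [hS] using hpos
  have hmax : ∀ p ∈ S, p ≤ m := by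
    simpa [hS, hm] using fun i : Fin k => hmono.monotone (Fin.le_def.mpr (by simp; omega))
  have hmT : m ∉ (univ.filter fun i : Fin k => (i : ℕ) < k - 1).image s := by
    rw [hm, mem_image]
    rintro ⟨i, hi, hsi⟩
    exact (hmono (Fin.lt_def.mpr (mem_filter.mp hi).2)).ne hsi
  have hT := tendsto_card_filter_count_mod_div_card hSpos (by simp [hS, hm]) hmax
    (hS ▸ image_subset_image (filter_subset _ _)) hmT (by rw [gcd_image]; exact hgcd) hr
  refine hT.congr fun n => ?_
  rw [Nat.subtype_card _ fun l => mem_compositionsWith hSpos,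
    Nat.subtype_card {l ∈ compositionsWith S n | l.count m % q = r} fun l => by
      rw [mem_filter, mem_compositionsWith hSpos, and_assoc]]
end
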